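/- arXiv:1407.7285 — 3 statements merged into one kernel-verified Lean document; each statement's English description precedes it below -/
import Mathlib

section
/- If there exist integers r and s with 0 ≤ r < 3^s such that p(N) ≢ 0 (mod 3) for only finitely many N ≡ r (mod 3^s), then there exist integers r' and t with 0 ≤ r' < 3^t such that p(N) ≡ 0 (mod 3) for all N ≡ r' (mod 3^t). -/
/-- The partition function `p n`. -/
def partitionFun (n : ℕ) : ℕ := Fintype.card (Nat.Partition n)

/-- If some progression `r mod 3^s` contains only finitely many `N` with
`p(N) ≢ 0 (mod 3)`, then some progression `r' mod 3^t` satisfies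
`p(N) ≡ 0 (mod 3)` for all its members. -/
theorem partition_mod_three_finite_implies_full_progression
    (h : ∃ r s : ℕ, r < 3 ^ s ∧
      {N : ℕ | N % 3 ^ s = r ∧ ¬ (3 ∣ partitionFun N)}.Finite) :
    ∃ r' t : ℕ, r' < 3 ^ t ∧
      ∀ N : ℕ, N % 3 ^ t = r' → 3 ∣ partitionFun N := by
  obtain ⟨r, s, hr, hfin⟩ := h
  obtain ⟨B, hB⟩ := hfin.bddAbove
  -- the new residue: element of the progression larger than B
  set r' : ℕ := r + 3 ^ s * (B + 1) with hr'
  obtain ⟨n, hn⟩ := pow_unbounded_of_one_lt r' (by norm_num : (1:ℕ) < 3)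
  refine ⟨r', max s n, lt_of_lt_of_le hn (Nat.pow_le_pow_right (by norm_num) (le_max_right s n)), ?_⟩
  intro N hN
  by_contra hnd
  -- N is in the bad set
  have hmem : N ∈ {N : ℕ | N % 3 ^ s = r ∧ ¬ (3 ∣ partitionFun N)} := by
    refine ⟨?_, hnd⟩
    have hdvd : 3 ^ s ∣ 3 ^ (max s n) := pow_dvd_pow 3 (le_max_left s n)
    have : N % 3 ^ s = r' % 3 ^ s := by
      conv_lhs => rw [← Nat.mod_mod_of_dvd N hdvd, hN]
    rw [this, hr', Nat.add_mul_mod_self_left, Nat.mod_eq_of_lt hr]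
  have hle : N ≤ B := hB hmem
  have hge : r' ≤ N := hN ▸ Nat.mod_le N _
  have h3s : 1 ≤ 3 ^ s := Nat.one_le_pow _ _ (by norm_num)
  have : B + 1 ≤ r' := by
    have := Nat.le_mul_of_pos_left (B + 1) (show 0 < 3 ^ s from h3s)
    omega
  omega
end

section
/- Over F_3, the power series Δ^{(9^s-1)/8} (where Δ = q·∏_{n≥1}(1-q^n)^{24}) equals q^{(9^s-1)/8} · ∏_{n≥1}(1 - q^{3·9^s n}) · ∏_{n≥1} 1/(1-q^{3n}). -/
open PowerSeries Finset

instance : Fact (Nat.Prime 3) := ⟨by norm_num⟩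

/-- The discriminant modular form `Δ = q·∏_{n≥1}(1-qⁿ)^{24}` as a formal power
series over `ℤ`, defined coefficientwise via the stabilized partial products. -/
noncomputable def Delta : PowerSeries ℤ :=
  PowerSeries.mk fun n =>
    PowerSeries.coeff (R := ℤ) n
      (PowerSeries.X * ∏ k ∈ Finset.range (n + 1), (1 - (PowerSeries.X : PowerSeries ℤ) ^ (k + 1)) ^ 24)

/-!
Since `24·(9^s-1)/8 + 3 = 3^(2s+1)` and `(1 - qⁿ)³ = 1 - q^{3n}`, Frobenius gives
`(1 - qⁿ)^{24·(9^s-1)/8} · (1 - q^{3n}) = 1 - q^{3·9^s·n}` over `F₃`.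
Taking the product over `n` gives the identity, up to truncating every infinite product: the
factors with `n > d` are `≡ 1 mod q^{d+1}`, so they do not affect the coefficient of `q^d`.
-/

namespace PowerSeries

variable {R : Type*} [CommRing R]

instance charP (p : ℕ) [CharP R p] : CharP R⟦X⟧ p :=
  charP_of_injective_ringHom C_injective p

theorem coeff_eq_of_X_pow_dvd_sub {f g : R⟦X⟧} {n i : ℕ} (h : X ^ n ∣ f - g)
    (hi : i < n) : coeff i f = coeff i g := by
  rw [← sub_eq_zero, ← map_sub]
  exact X_pow_dvd_iff.mp h i hi

theorem X_pow_dvd_one_sub_X_pow_pow_sub_one (k n : ℕ) :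
    (X : R⟦X⟧) ^ k ∣ (1 - X ^ k) ^ n - 1 := by
  simpa using sub_dvd_pow_sub_pow (1 - (X : R⟦X⟧) ^ k) 1 n

theorem X_pow_dvd_prod_range_sub_prod_range {f : ℕ → R⟦X⟧}
    (hf : ∀ k, X ^ (k + 1) ∣ f k - 1) {m n : ℕ} (hmn : m ≤ n) :
    X ^ (m + 1) ∣ ∏ k ∈ range n, f k - ∏ k ∈ range m, f k := by
  induction n, hmn using Nat.le_induction with
  | base => simp
  | succ n hmn ih =>
    have hfn : X ^ (m + 1) ∣ f n - 1 := (pow_dvd_pow X (by omega)).trans (hf n)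
    rw [prod_range_succ,
      show (∏ k ∈ range n, f k) * f n - ∏ k ∈ range m, f k
        = (∏ k ∈ range n, f k) * (f n - 1) + (∏ k ∈ range n, f k - ∏ k ∈ range m, f k) by ring]
    exact dvd_add (hfn.mul_left _) ih

end PowerSeries

theorem X_pow_dvd_Delta_sub (d : ℕ) :
    X ^ (d + 1) ∣ Delta - X * ∏ k ∈ range (d + 1), (1 - (X : ℤ⟦X⟧) ^ (k + 1)) ^ 24 := by
  refine X_pow_dvd_iff.mpr fun i hi => ?_
  rw [map_sub, sub_eq_zero, Delta, coeff_mk]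
  refine (coeff_eq_of_X_pow_dvd_sub ?_ i.lt_succ_self).symm
  rw [← mul_sub]
  exact ((pow_dvd_pow X (i + 1).le_succ).trans (X_pow_dvd_prod_range_sub_prod_range
    (fun k => X_pow_dvd_one_sub_X_pow_pow_sub_one _ _) (by omega))).mul_left X

theorem twenty_four_mul_nine_pow_sub_one_div_eight_add_three (s : ℕ) :
    24 * ((9 ^ s - 1) / 8) + 3 = 3 ^ (2 * s + 1) := by
  have h8 : 8 ∣ 9 ^ s - 1 := by simpa using Nat.sub_dvd_pow_sub_pow 9 1 s
  have h9 : 1 ≤ 9 ^ s := Nat.one_le_pow _ _ (by norm_num)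
  rw [pow_succ, pow_mul]
  norm_num
  omega

theorem one_sub_pow_mul_one_sub_pow_three {R : Type*} [CommRing R] [CharP R 3] (x : R) (s : ℕ) :
    (1 - x) ^ (24 * ((9 ^ s - 1) / 8)) * (1 - x ^ 3) = 1 - x ^ (3 * 9 ^ s) := by
  have hcube : (1 - x) ^ 3 = 1 - x ^ 3 := by rw [sub_pow_char, one_pow]
  have h9 : 3 * 9 ^ s = 3 ^ (2 * s + 1) := by rw [pow_succ, pow_mul]; norm_num; ring
  rw [← hcube, ← pow_add, twenty_four_mul_nine_pow_sub_one_div_eight_add_three, h9,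
    sub_pow_char_pow, one_pow]

theorem delta_pow_mod_three_general (s : ℕ) :
    ∀ d : ℕ,
      PowerSeries.coeff (R := ZMod 3) d
        ((PowerSeries.map (Int.castRingHom (ZMod 3)) Delta) ^ ((9 ^ s - 1) / 8)) =
      PowerSeries.coeff (R := ZMod 3) d
        ((PowerSeries.X : PowerSeries (ZMod 3)) ^ ((9 ^ s - 1) / 8) *
          (∏ n ∈ Finset.range (d + 1),
            (1 - (PowerSeries.X : PowerSeries (ZMod 3)) ^ (3 * 9 ^ s * (n + 1)))) *
          (∏ n ∈ Finset.range (d + 1),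
            (1 - (PowerSeries.X : PowerSeries (ZMod 3)) ^ (3 * (n + 1))))⁻¹) := by
  intro d
  set m := (9 ^ s - 1) / 8
  set P : (ZMod 3)⟦X⟧ := ∏ k ∈ range (d + 1), (1 - X ^ (k + 1)) ^ 24
  set B : (ZMod 3)⟦X⟧ := ∏ n ∈ range (d + 1), (1 - X ^ (3 * (n + 1)))
  have hB : B * B⁻¹ = 1 := PowerSeries.mul_inv_cancel B (by simp [B, map_prod])
  have hfrob : (X * P) ^ m * B = X ^ m * ∏ n ∈ range (d + 1), (1 - X ^ (3 * 9 ^ s * (n + 1))) := by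
    rw [mul_pow, mul_assoc, ← prod_pow, ← prod_mul_distrib]
    refine congrArg _ (prod_congr rfl fun n _ => ?_)
    rw [← pow_mul, mul_comm 3, pow_mul X (n + 1) 3, one_sub_pow_mul_one_sub_pow_three, ← pow_mul,
      mul_comm]
  have hDelta : X ^ (d + 1) ∣ map (Int.castRingHom (ZMod 3)) Delta - X * P := by
    simpa [P] using map_dvd (map (Int.castRingHom (ZMod 3))) (X_pow_dvd_Delta_sub d)
  rw [coeff_eq_of_X_pow_dvd_sub (hDelta.trans (sub_dvd_pow_sub_pow _ _ m)) d.lt_succ_self,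
    ← hfrob, mul_assoc, hB, mul_one]

/-- Over `F₃`, `Δ^{(9^s-1)/8} = q^{(9^s-1)/8} · ∏_{n≥1}(1-q^{3·9^s n}) · ∏_{n≥1} 1/(1-q^{3n})`,
stated coefficientwise via stabilized partial products (with the power series inverse over the
field `F₃`). -/
theorem delta_pow_mod_three (s : ℕ) (hs : 0 < s) :
    ∀ d : ℕ,
      PowerSeries.coeff (R := ZMod 3) d
        ((PowerSeries.map (Int.castRingHom (ZMod 3)) Delta) ^ ((9 ^ s - 1) / 8)) =
      PowerSeries.coeff (R := ZMod 3) d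
        ((PowerSeries.X : PowerSeries (ZMod 3)) ^ ((9 ^ s - 1) / 8) *
          (∏ n ∈ Finset.range (d + 1),
            (1 - (PowerSeries.X : PowerSeries (ZMod 3)) ^ (3 * 9 ^ s * (n + 1)))) *
          (∏ n ∈ Finset.range (d + 1),
            (1 - (PowerSeries.X : PowerSeries (ZMod 3)) ^ (3 * (n + 1))))⁻¹) :=
  delta_pow_mod_three_general s
end

section
/- Define a_s(n) by ∑_{n≥0} a_s(n) q^n = Δ^{(9^s-1)/8} as formal power series over the integers, and r_s(j) by ∏_{n≥1}(1-q^{3·9^s n}) = 1 + ∑_{j≥1} r_s(j) q^{3·9^s j}. Then for all n, a_s(n) ≡ p((n - (9^s-1)/8)/3) + ∑_{j≥1} r_s(j) · p((n - (9^s-1)/8)/3 - 9^s j) (mod 3), where p(x) is interpreted as 0 if x is not a nonnegative integer. -/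
open PowerSeries Finset

/-- `a_s(n)`: the `n`-th coefficient of `Δ^{(9^s-1)/8}`. -/
noncomputable def aCoeff (s n : ℕ) : ℤ :=
  PowerSeries.coeff (R := ℤ) n (Delta ^ ((9 ^ s - 1) / 8))

/-- `r_s(j)`: defined by `∏_{n≥1}(1-q^{3·9^s n}) = 1 + ∑_{j≥1} r_s(j) q^{3·9^s j}`,
extracted coefficientwise from the stabilized partial product. -/
noncomputable def rCoeff (s j : ℕ) : ℤ :=
  PowerSeries.coeff (R := ℤ) (3 * 9 ^ s * j)
    (∏ n ∈ Finset.range (j + 1), (1 - (PowerSeries.X : PowerSeries ℤ) ^ (3 * 9 ^ s * (n + 1))))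

/-- `p(x)` extended to `ℤ`, vanishing on negative arguments. -/
def pExt (x : ℤ) : ℤ := if 0 ≤ x then (partitionFun x.toNat : ℤ) else 0

/-- `p(x/3)` when `3 ∣ x`, and `0` if `x/3` is not an integer. -/
def pDiv3 (x : ℤ) : ℤ := if (3 : ℤ) ∣ x then pExt (x / 3) else 0

/-! Write `E = ∏ (1 - qⁿ)` and `P = ∑ p(n) qⁿ`, so that `P * E = 1` (Euler). Since
`24 · (9^s - 1)/8 = 3 · 9^s - 3` and, over `𝔽₃`, `E^(3^k) = E(q^(3^k))` (Frobenius), we get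
`Δ^((9^s-1)/8) ≡ q^((9^s-1)/8) · E(q^(3·9^s)) · P(q³) (mod 3)`; the `r_s(j)` are the coefficients of
`E`, so reading off the coefficient of `qⁿ` gives the recursion. -/

open scoped PowerSeries.WithPiTopology

namespace PowerSeries

variable {R : Type*} [CommRing R]

theorem smodEq_span_X_pow_iff {N : ℕ} {f g : R⟦X⟧} :
    f ≡ g [SMOD Ideal.span {(X : R⟦X⟧) ^ N}] ↔ ∀ m < N, coeff m f = coeff m g := by
  simp only [SModEq.sub_mem, Ideal.mem_span_singleton, X_pow_dvd_iff, map_sub, sub_eq_zero]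

theorem prod_smodEq_prod_range {f : ℕ → R⟦X⟧} (hf : ∀ i, X ^ (i + 1) ∣ f i - 1) {N : ℕ}
    {s : Finset ℕ} (hs : range N ⊆ s) :
    ∏ i ∈ s, f i ≡ ∏ i ∈ range N, f i [SMOD Ideal.span {(X : R⟦X⟧) ^ N}] := by
  have htail :
      ∏ i ∈ s \ range N, f i ≡ ∏ i ∈ s \ range N, 1 [SMOD Ideal.span {(X : R⟦X⟧) ^ N}] :=
    SModEq.prod fun i hi => by
      rw [SModEq.sub_mem, Ideal.mem_span_singleton]
      exact (pow_dvd_pow X (by simp only [mem_sdiff, mem_range] at hi; omega)).trans (hf i)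
  rw [← prod_sdiff hs]
  simpa using htail.mul (SModEq.refl (∏ i ∈ range N, f i))

theorem tprod_smodEq_prod_range [TopologicalSpace R] [T2Space R] {f : ℕ → R⟦X⟧}
    (hmul : Multipliable f) (hf : ∀ i, X ^ (i + 1) ∣ f i - 1) (N : ℕ) :
    ∏' i, f i ≡ ∏ i ∈ range N, f i [SMOD Ideal.span {(X : R⟦X⟧) ^ N}] := by
  refine smodEq_span_X_pow_iff.mpr fun m hm => tendsto_nhds_unique
    (((WithPiTopology.continuous_coeff R m).tendsto _).comp hmul.hasProd)
    (tendsto_atTop_of_eventually_const (i₀ := range N) fun s hs => ?_)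
  exact smodEq_span_X_pow_iff.mp (prod_smodEq_prod_range hf hs) m hm

theorem partitionFun_mul_tprod_one_sub_X_pow [TopologicalSpace R] [IsTopologicalRing R]
    [T2Space R] :
    (mk fun n => (partitionFun n : R)) * ∏' i, (1 - X ^ (i + 1) : R⟦X⟧) = 1 := by
  have h := (Nat.Partition.hasProd_powerSeriesMk_card_restricted R fun _ => True).mul
    (WithPiTopology.multipliable_one_sub_X_pow R).hasProd
  have hfac (i : ℕ) : (∑' j : ℕ, (X : R⟦X⟧) ^ ((i + 1) * j)) * (1 - X ^ (i + 1)) = 1 := by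
    simp_rw [pow_mul]
    exact WithPiTopology.tsum_pow_mul_one_sub_of_constantCoeff_eq_zero (by simp)
  simp only [if_true, hfac] at h
  convert h.unique hasProd_one using 3
  ext n
  simp [partitionFun, Nat.Partition.restricted]

theorem pow_eq_expand_of_eq_pow {p : ℕ} [hp : Fact p.Prime] (f : (ZMod p)⟦X⟧) {q k : ℕ}
    (hq : q ≠ 0) (hqk : q = p ^ k) : f ^ q = expand q hq f := by
  subst hqk
  have h := MvPowerSeries.map_iterateFrobenius_expand p hp.out.ne_zero f k
  have hid : iterateFrobenius (ZMod p) p k = RingHom.id _ := by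
    ext x; simp [iterateFrobenius_def, ZMod.pow_card_pow]
  rw [hid] at h
  exact h.symm

theorem coeff_expand_mul_eq_sum {t : ℕ} (ht : t ≠ 0) (f g : R⟦X⟧) (m : ℕ) :
    coeff m (expand t ht f * g) =
      ∑ j ∈ range (m + 1), if t * j ≤ m then coeff j f * coeff (m - t * j) g else 0 := by
  have ht₀ := Nat.pos_of_ne_zero ht
  rw [coeff_mul,
    Nat.sum_antidiagonal_eq_sum_range_succ fun a b => coeff a (expand t ht f) * coeff b g]
  simp_rw [coeff_expand, ite_mul, zero_mul]
  rw [← sum_filter, ← sum_filter]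
  refine sum_nbij' (· / t) (t * ·) ?_ ?_ ?_ ?_ ?_
  all_goals simp only [mem_filter, mem_range, Nat.succ_eq_add_one]
  · rintro _ ⟨hb, b, rfl⟩
    rw [Nat.mul_div_cancel_left b ht₀]
    exact ⟨(Nat.le_mul_of_pos_left b ht₀).trans_lt hb, by omega⟩
  · exact fun j ⟨_, hj⟩ => ⟨by omega, dvd_mul_right t j⟩
  · exact fun a ⟨_, ha⟩ => Nat.mul_div_cancel' ha
  · exact fun j _ => Nat.mul_div_cancel_left j ht₀
  · exact fun a ⟨_, ha⟩ => by rw [Nat.mul_div_cancel' ha]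

end PowerSeries

noncomputable def partitionSeries : ℤ⟦X⟧ := mk fun n => (partitionFun n : ℤ)

noncomputable def eulerProduct : ℤ⟦X⟧ := ∏' i, (1 - X ^ (i + 1))

theorem partitionSeries_mul_eulerProduct : partitionSeries * eulerProduct = 1 :=
  partitionFun_mul_tprod_one_sub_X_pow

theorem eulerProduct_smodEq_prod_range (N : ℕ) :
    eulerProduct ≡ ∏ i ∈ range N, (1 - X ^ (i + 1))
      [SMOD Ideal.span {(X : ℤ⟦X⟧) ^ N}] :=
  tprod_smodEq_prod_range (WithPiTopology.multipliable_one_sub_X_pow ℤ) (fun i => by simp) N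

theorem Delta_eq_X_mul_eulerProduct_pow : Delta = X * eulerProduct ^ 24 := by
  ext n
  rw [Delta, coeff_mk, prod_pow]
  exact smodEq_span_X_pow_iff.mp
    ((SModEq.refl X).mul ((eulerProduct_smodEq_prod_range (n + 1)).pow 24)).symm n n.lt_succ_self

theorem rCoeff_eq_coeff_eulerProduct (s j : ℕ) : rCoeff s j = coeff j eulerProduct := by
  have hexpand : ∏ n ∈ range (j + 1), (1 - (X : ℤ⟦X⟧) ^ (3 * 9 ^ s * (n + 1)))
      = expand (3 * 9 ^ s) (by positivity) (∏ n ∈ range (j + 1), (1 - X ^ (n + 1))) := by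
    simp [map_prod, pow_mul]
  rw [rCoeff, hexpand, coeff_expand_mul]
  exact (smodEq_span_X_pow_iff.mp (eulerProduct_smodEq_prod_range (j + 1)) j j.lt_succ_self).symm

theorem pDiv3_natCast (m : ℕ) :
    pDiv3 m = if 3 ∣ m then (partitionFun (m / 3) : ℤ) else 0 := by
  by_cases h : 3 ∣ m
  · rw [pDiv3, if_pos (by exact_mod_cast h), if_pos h, pExt,
      show (m : ℤ) / 3 = (m / 3 : ℕ) by omega, if_pos (by positivity), Int.toNat_natCast]
  · rw [pDiv3, if_neg (by exact_mod_cast h), if_neg h]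

theorem pDiv3_of_neg {x : ℤ} (hx : x < 0) : pDiv3 x = 0 := by
  simp only [pDiv3, pExt]
  split_ifs <;> omega

theorem coeff_X_pow_mul_expand_partitionSeries (d m : ℕ) :
    coeff m (X ^ d * expand 3 three_ne_zero partitionSeries) = pDiv3 ((m : ℤ) - d) := by
  rw [coeff_X_pow_mul']
  split_ifs with h
  · rw [coeff_expand, ← Nat.cast_sub h, pDiv3_natCast, partitionSeries, coeff_mk]
  · rw [pDiv3_of_neg (by omega)]

theorem three_mul_nine_pow_eq (s : ℕ) : 3 * 9 ^ s = 24 * ((9 ^ s - 1) / 8) + 3 := by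
  have h8 : 8 ∣ 9 ^ s - 1 := by simpa using Nat.sub_dvd_pow_sub_pow 9 1 s
  have h1 : 1 ≤ 9 ^ s := Nat.one_le_pow _ _ (by norm_num)
  omega

theorem map_Delta_pow (s : ℕ) :
    map (Int.castRingHom (ZMod 3)) (Delta ^ ((9 ^ s - 1) / 8)) =
      map (Int.castRingHom (ZMod 3)) (expand (3 * 9 ^ s) (by positivity) eulerProduct *
        (X ^ ((9 ^ s - 1) / 8) * expand 3 three_ne_zero partitionSeries)) := by
  have : Fact (Nat.Prime 3) := ⟨Nat.prime_three⟩
  set d := (9 ^ s - 1) / 8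
  set e := map (Int.castRingHom (ZMod 3)) eulerProduct
  set p := map (Int.castRingHom (ZMod 3)) partitionSeries
  have hinv : e ^ 3 * expand 3 three_ne_zero p = 1 := by
    rw [pow_eq_expand_of_eq_pow e three_ne_zero (pow_one 3).symm, ← map_mul, mul_comm,
      ← map_mul, partitionSeries_mul_eulerProduct, map_one, map_one]
  simp only [map_mul, map_pow, map_X, map_expand, Delta_eq_X_mul_eulerProduct_pow]
  calc (X * e ^ 24) ^ d = X ^ d * (e ^ (24 * d + 3) * expand 3 three_ne_zero p) := by
        rw [pow_add, mul_assoc, hinv]; ring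
    _ = _ := by
        have h3 : 3 * 9 ^ s = 3 ^ (2 * s + 1) := by rw [pow_succ, pow_mul]; norm_num [mul_comm]
        rw [← three_mul_nine_pow_eq, pow_eq_expand_of_eq_pow e (by positivity) h3]
        ring

theorem coeff_expand_eulerProduct_mul (s d n : ℕ) :
    coeff n (expand (3 * 9 ^ s) (by positivity) eulerProduct *
        (X ^ d * expand 3 three_ne_zero partitionSeries)) =
      pDiv3 ((n : ℤ) - d) +
        ∑ j ∈ Icc 1 n, rCoeff s j * pDiv3 ((n : ℤ) - d - 3 * 9 ^ s * j) := by
  have hterm : ∀ j, (if 3 * 9 ^ s * j ≤ n then coeff j eulerProduct *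
        coeff (n - 3 * 9 ^ s * j) (X ^ d * expand 3 three_ne_zero partitionSeries) else 0) =
      rCoeff s j * pDiv3 ((n : ℤ) - d - 3 * 9 ^ s * j) := by
    intro j
    rw [rCoeff_eq_coeff_eulerProduct]
    split_ifs with h
    · rw [coeff_X_pow_mul_expand_partitionSeries]
      push_cast [h]
      ring_nf
    · have hlt : (n : ℤ) < 3 * 9 ^ s * j := by exact_mod_cast not_le.mp h
      rw [pDiv3_of_neg (by omega), mul_zero]
  have hr0 : rCoeff s 0 = 1 := by simp [rCoeff]
  rw [coeff_expand_mul_eq_sum, sum_congr rfl fun j _ => hterm j, range_eq_Ico,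
    sum_eq_sum_Ico_succ_bot (by omega : 0 < n + 1), zero_add, Ico_add_one_right_eq_Icc, hr0]
  simp

theorem aCoeff_recursion_general (s : ℕ) (n : ℕ) :
    aCoeff s n ≡
      pDiv3 ((n : ℤ) - ((9 ^ s - 1) / 8 : ℕ)) +
        ∑ j ∈ Finset.Icc 1 n,
          rCoeff s j * pDiv3 ((n : ℤ) - ((9 ^ s - 1) / 8 : ℕ) - 3 * 9 ^ s * j) [ZMOD 3] := by
  have h := congrArg (coeff n) (map_Delta_pow s)
  rw [coeff_map, coeff_map, coeff_expand_eulerProduct_mul] at h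
  exact (ZMod.intCast_eq_intCast_iff _ _ 3).mp h

/-- The recursion `a_s(n) ≡ p((n-(9^s-1)/8)/3) + ∑_{j≥1} r_s(j)·p((n-(9^s-1)/8)/3 - 9^s j)
(mod 3)`, where `p` is interpreted as `0` at arguments that are not nonnegative integers.
(The sum is finite; it is truncated at `j = n`, beyond which all terms vanish.) -/
theorem aCoeff_recursion (s : ℕ) (hs : 0 < s) (n : ℕ) :
    aCoeff s n ≡
      pDiv3 ((n : ℤ) - ((9 ^ s - 1) / 8 : ℕ)) +
        ∑ j ∈ Finset.Icc 1 n,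
          rCoeff s j * pDiv3 ((n : ℤ) - ((9 ^ s - 1) / 8 : ℕ) - 3 * 9 ^ s * j) [ZMOD 3] :=
  aCoeff_recursion_general s n
end
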